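/- If in the stabilised Euler-Poisson-Boltzmann system one chooses q = η∇φ and Λ = α div(u) with constants η > 0 and α > 0, then classical solutions satisfy the energy dissipation inequality ∂_t( (ε²/2)|∇φ|² + (φ-1)e^φ + (1/2)ρ|u|² ) + div( (φ + |u|²/2)(ρu - q) - ε²φ∂_t(∇φ) - uΛ ) ≤ 0. -/

import Mathlib

open Real RealInnerProductSpace

noncomputable def vdiv {d : ℕ} (v : EuclideanSpace ℝ (Fin d) → EuclideanSpace ℝ (Fin d))
    (x : EuclideanSpace ℝ (Fin d)) : ℝ :=
  ∑ i, fderiv ℝ v x (EuclideanSpace.single i 1) i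

section Infra

variable {d : ℕ}

local notation "E" => EuclideanSpace ℝ (Fin d)

/-- components of a gradient -/
lemma gradient_apply' (g : E → ℝ) (x : E) (i : Fin d) :
    gradient g x i = fderiv ℝ g x (EuclideanSpace.single i 1) := by
  have h1 : gradient g x i = ⟪gradient g x, EuclideanSpace.single i (1:ℝ)⟫ := by
    rw [EuclideanSpace.inner_single_right]; simp
  rw [h1, gradient, InnerProductSpace.toDual_symm_apply]

lemma clm_eval_eq_sum (L : E →L[ℝ] ℝ) (v : E) :
    L v = ∑ i, v i * L (EuclideanSpace.single i 1) := by
  have hv : v = ∑ i, (v i) • EuclideanSpace.single i (1:ℝ) := by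
    ext j
    rw [show ((∑ i, (v i) • EuclideanSpace.single i (1:ℝ)) j) = ∑ i, ((v i) • EuclideanSpace.single i (1:ℝ)) j from by
      rw [WithLp.ofLp_sum]; exact Finset.sum_apply j Finset.univ _]
    simp [EuclideanSpace.single_apply]
  conv_lhs => rw [hv]
  rw [map_sum]
  congr 1; ext i
  simp

lemma norm_sq_eq_sum (w : E) : ‖w‖ ^ 2 = ∑ i, (w i) ^ 2 := by
  rw [EuclideanSpace.norm_eq, Real.sq_sqrt (by positivity)]
  congr 1; ext i; simp [sq_abs]

/-- slice smoothness -/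
lemma sliceX_contDiff {F : Type*} [NormedAddCommGroup F] [NormedSpace ℝ F]
    {G : ℝ × E → F} (hG : ContDiff ℝ (⊤ : ℕ∞) G) (t : ℝ) :
    ContDiff ℝ (⊤ : ℕ∞) (fun y : E => G (t, y)) :=
  hG.comp (ContDiff.prodMk contDiff_const contDiff_id)

lemma fderiv_sliceX {F : Type*} [NormedAddCommGroup F] [NormedSpace ℝ F]
    {G : ℝ × E → F} {t : ℝ} {x : E} (hG : DifferentiableAt ℝ G (t, x)) (v : E) :
    fderiv ℝ (fun y : E => G (t, y)) x v = fderiv ℝ G (t, x) (0, v) := by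
  have h := (hG.hasFDerivAt.comp x (hasFDerivAt_prodMk_right t x)).fderiv
  have h2 : (fun y : E => G (t, y)) = G ∘ Prod.mk t := rfl
  rw [h2, h]; rfl

lemma hasDerivAt_sliceT {F : Type*} [NormedAddCommGroup F] [NormedSpace ℝ F]
    {G : ℝ × E → F} {t : ℝ} {x : E} (hG : DifferentiableAt ℝ G (t, x)) :
    HasDerivAt (fun s : ℝ => G (s, x)) (fderiv ℝ G (t, x) (1, 0)) t := by
  have h := (hG.hasFDerivAt.comp t (hasFDerivAt_prodMk_left t x)).hasDerivAt
  convert h using 1 <;> rfl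

/-- partial derivative in a fixed direction, as a function, is smooth -/
lemma pd_contDiff {G : ℝ × E → ℝ} (hG : ContDiff ℝ (⊤ : ℕ∞) G) (w : ℝ × E) :
    ContDiff ℝ (⊤ : ℕ∞) (fun p => fderiv ℝ G p w) := by
  have h1 : ContDiff ℝ (⊤ : ℕ∞) (fderiv ℝ G) := hG.fderiv_right (by simp)
  exact (ContinuousLinearMap.apply ℝ ℝ w).contDiff.comp h1

lemma fderiv_pd {G : ℝ × E → ℝ} (hG : ContDiff ℝ (⊤ : ℕ∞) G) (p : ℝ × E) (a b : ℝ × E) :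
    fderiv ℝ (fun z => fderiv ℝ G z a) p b = fderiv ℝ (fderiv ℝ G) p b a := by
  have h1 : DifferentiableAt ℝ (fderiv ℝ G) p :=
    ((hG.fderiv_right (m := (⊤ : ℕ∞)) (by simp)).differentiable (by simp)) p
  have := fderiv_clm_apply (𝕜 := ℝ) h1 (differentiableAt_const a)
  rw [show (fun z => fderiv ℝ G z a) = fun z => (fderiv ℝ G z) ((fun _ : ℝ × E => a) z) from rfl,
    this]
  simp

lemma pd_swap {G : ℝ × E → ℝ} (hG : ContDiff ℝ (⊤ : ℕ∞) G) (p : ℝ × E) (a b : ℝ × E) :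
    fderiv ℝ (fun z => fderiv ℝ G z a) p b = fderiv ℝ (fun z => fderiv ℝ G z b) p a := by
  rw [fderiv_pd hG p a b, fderiv_pd hG p b a]
  exact hG.contDiffAt.isSymmSndFDerivAt (by rw [minSmoothness_of_isRCLikeNormedField]; exact WithTop.coe_le_coe.mpr le_top) b a

end Infra
section Infra2

variable {d : ℕ}
local notation "E" => EuclideanSpace ℝ (Fin d)

lemma fderiv_proj {F : Type*} [NormedAddCommGroup F] [NormedSpace ℝ F]
    {v : F → E} {x : F} (hv : DifferentiableAt ℝ v x) (i : Fin d) (w : F) :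
    fderiv ℝ (fun y => v y i) x w = fderiv ℝ v x w i := by
  have h := (((EuclideanSpace.proj i : EuclideanSpace ℝ (Fin d) →L[ℝ] ℝ)).hasFDerivAt.comp x
    hv.hasFDerivAt).fderiv
  have h2 : (fun y => v y i) = ((EuclideanSpace.proj i : EuclideanSpace ℝ (Fin d) →L[ℝ] ℝ)) ∘ v := rfl
  rw [h2, h]; rfl

lemma vdiv_eq_sum {v : E → E} {x : E} (hv : DifferentiableAt ℝ v x) :
    vdiv v x = ∑ i, fderiv ℝ (fun y => v y i) x (EuclideanSpace.single i 1) := by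
  unfold vdiv
  refine Finset.sum_congr rfl fun i _ => ?_
  rw [fderiv_proj hv]

lemma vdiv_sub {v w : E → E} {x : E} (hv : DifferentiableAt ℝ v x)
    (hw : DifferentiableAt ℝ w x) :
    vdiv (fun y => v y - w y) x = vdiv v x - vdiv w x := by
  unfold vdiv
  rw [← Finset.sum_sub_distrib]
  refine Finset.sum_congr rfl fun i _ => ?_
  rw [fderiv_fun_sub hv hw]
  simp

lemma vdiv_smul {f : E → ℝ} {v : E → E} {x : E} (hf : DifferentiableAt ℝ f x)
    (hv : DifferentiableAt ℝ v x) :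
    vdiv (fun y => f y • v y) x = fderiv ℝ f x (v x) + f x * vdiv v x := by
  unfold vdiv
  have h : ∀ i : Fin d, fderiv ℝ (fun y => f y • v y) x (EuclideanSpace.single i 1) i
      = f x * fderiv ℝ v x (EuclideanSpace.single i 1) i
        + (v x i) * fderiv ℝ f x (EuclideanSpace.single i 1) := by
    intro i
    rw [fderiv_fun_smul hf hv]
    simp [mul_comm]
  rw [Finset.sum_congr rfl fun i _ => h i, Finset.sum_add_distrib, ← Finset.mul_sum]
  rw [clm_eval_eq_sum (fderiv ℝ f x) (v x)]
  ring

lemma gradient_differentiable {g : E → ℝ} (hg : ContDiff ℝ (⊤ : ℕ∞) g) :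
    Differentiable ℝ (fun y => gradient g y) := by
  have h1 : Differentiable ℝ (fderiv ℝ g) := (hg.fderiv_right (m := (⊤ : ℕ∞)) (by simp)).differentiable (by simp)
  have h2 := (InnerProductSpace.toDual ℝ E).symm.toContinuousLinearEquiv.differentiable
  exact h2.comp h1


lemma hasDerivAt_euclidean {v : ℝ → E} {V : E} {t : ℝ}
    (h : ∀ i, HasDerivAt (fun s => v s i) (V i) t) : HasDerivAt v V t := by
  have h1 : HasFDerivAt (fun s (i : Fin d) => v s i)
      (ContinuousLinearMap.pi
        (fun i => ContinuousLinearMap.smulRight (1 : ℝ →L[ℝ] ℝ) (V i))) t := by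
    rw [hasFDerivAt_pi]
    intro i
    exact (h i).hasFDerivAt
  have h3 := (((PiLp.continuousLinearEquiv 2 ℝ (fun _ : Fin d => ℝ)).symm :
      (Fin d → ℝ) →L[ℝ] EuclideanSpace ℝ (Fin d))).hasFDerivAt.comp_hasDerivAt t h1.hasDerivAt
  exact h3.congr_deriv (by ext i; simp)

end Infra2

set_option maxHeartbeats 2000000 in
/-- Energy dissipation inequality for the stabilised Euler-Poisson-Boltzmann
system with the choices `q = η∇φ` and `Λ = α div u`. -/
theorem stabilised_EPB_energy_dissipation {d : ℕ}
    (T ε : ℝ) (hT : 0 < T) (hε : 0 < ε)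
    (Ω : Set (EuclideanSpace ℝ (Fin d))) (hΩo : IsOpen Ω) (hΩb : Bornology.IsBounded Ω)
    (ρ φ Λ : ℝ → EuclideanSpace ℝ (Fin d) → ℝ)
    (u q : ℝ → EuclideanSpace ℝ (Fin d) → EuclideanSpace ℝ (Fin d))
    (hρ : ContDiff ℝ (⊤ : ℕ∞) fun p : ℝ × EuclideanSpace ℝ (Fin d) => ρ p.1 p.2)
    (hu : ContDiff ℝ (⊤ : ℕ∞) fun p : ℝ × EuclideanSpace ℝ (Fin d) => u p.1 p.2)
    (hφ : ContDiff ℝ (⊤ : ℕ∞) fun p : ℝ × EuclideanSpace ℝ (Fin d) => φ p.1 p.2)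
    (hq : ContDiff ℝ (⊤ : ℕ∞) fun p : ℝ × EuclideanSpace ℝ (Fin d) => q p.1 p.2)
    (hΛ : ContDiff ℝ (⊤ : ℕ∞) fun p : ℝ × EuclideanSpace ℝ (Fin d) => Λ p.1 p.2)
    (η α : ℝ) (hη : 0 < η) (hα : 0 < α)
    (hqdef : ∀ t x, q t x = η • gradient (φ t) x)
    (hΛdef : ∀ t x, Λ t x = α * vdiv (fun y => u t y) x)
    (hpos : ∀ t x, 0 < ρ t x)
    (hmass : ∀ t ∈ Set.Ioo 0 T, ∀ x ∈ Ω,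
      deriv (fun s => ρ s x) t + vdiv (fun y => ρ t y • u t y - q t y) x = 0)
    (hmom : ∀ t ∈ Set.Ioo 0 T, ∀ x ∈ Ω, ∀ i : Fin d,
      deriv (fun s => ρ s x * u s x i) t
        + vdiv (fun y => u t y i • (ρ t y • u t y - q t y)) x
      = -(ρ t x * gradient (φ t) x i) + gradient (Λ t) x i)
    (hpoisson : ∀ t ∈ Set.Ioo 0 T, ∀ x ∈ Ω,
      -ε ^ 2 * vdiv (fun y => gradient (φ t) y) x = ρ t x - Real.exp (φ t x)) :
    ∀ t ∈ Set.Ioo 0 T, ∀ x ∈ Ω,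
      deriv (fun s => ε ^ 2 / 2 * ‖gradient (φ s) x‖ ^ 2
          + (φ s x - 1) * Real.exp (φ s x)
          + (1 / 2) * ρ s x * ‖u s x‖ ^ 2) t
        + vdiv (fun y =>
            (φ t y + ‖u t y‖ ^ 2 / 2) • (ρ t y • u t y - q t y)
              - (ε ^ 2 * φ t y) • deriv (fun s => gradient (φ s) y) t
              - Λ t y • u t y) x ≤ 0 := by
  intro t ht x hx
  have hui : ∀ i : Fin d, ContDiff ℝ (⊤ : ℕ∞) (fun p : ℝ × EuclideanSpace ℝ (Fin d) => u p.1 p.2 i) :=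
    fun i => (EuclideanSpace.proj i : EuclideanSpace ℝ (Fin d) →L[ℝ] ℝ).contDiff.comp hu
  have dφt : DifferentiableAt ℝ (φ t) x := ((sliceX_contDiff hφ t).differentiable (by simp)) x
  have dρt : DifferentiableAt ℝ (ρ t) x := ((sliceX_contDiff hρ t).differentiable (by simp)) x
  have dut : DifferentiableAt ℝ (u t) x := ((sliceX_contDiff hu t).differentiable (by simp)) x
  have dqt : DifferentiableAt ℝ (q t) x := ((sliceX_contDiff hq t).differentiable (by simp)) x
  have dΛt : DifferentiableAt ℝ (Λ t) x := ((sliceX_contDiff hΛ t).differentiable (by simp)) x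
  have duti : ∀ i, DifferentiableAt ℝ (fun y => u t y i) x :=
    fun i => ((sliceX_contDiff (hui i) t).differentiable (by simp)) x
  have dm : DifferentiableAt ℝ (fun y => ρ t y • u t y - q t y) x := (dρt.smul dut).sub dqt
  have hdφ : HasDerivAt (fun s => φ s x) (fderiv ℝ (fun p : ℝ × EuclideanSpace ℝ (Fin d) => φ p.1 p.2) (t, x) ((1:ℝ), (0 : EuclideanSpace ℝ (Fin d)))) t :=
    hasDerivAt_sliceT ((hφ.differentiable (by simp)) (t, x))
  have hdρ : HasDerivAt (fun s => ρ s x) (fderiv ℝ (fun p : ℝ × EuclideanSpace ℝ (Fin d) => ρ p.1 p.2) (t, x) ((1:ℝ), (0 : EuclideanSpace ℝ (Fin d)))) t :=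
    hasDerivAt_sliceT ((hρ.differentiable (by simp)) (t, x))
  have hdu : ∀ i : Fin d, HasDerivAt (fun s => u s x i) (fderiv ℝ (fun p : ℝ × EuclideanSpace ℝ (Fin d) => u p.1 p.2 i) (t, x) ((1:ℝ), (0 : EuclideanSpace ℝ (Fin d)))) t :=
    fun i => hasDerivAt_sliceT (((hui i).differentiable (by simp)) (t, x))
  have hgc : ∀ (s : ℝ) (y : EuclideanSpace ℝ (Fin d)) (i : Fin d),
      gradient (φ s) y i = fderiv ℝ (fun p : ℝ × EuclideanSpace ℝ (Fin d) => φ p.1 p.2) (s, y) ((0 : ℝ), EuclideanSpace.single i 1) := by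
    intro s y i
    rw [gradient_apply']
    exact fderiv_sliceX ((hφ.differentiable (by simp)) (s, y)) _
  have hdg : ∀ (y : EuclideanSpace ℝ (Fin d)) (i : Fin d),
      HasDerivAt (fun s => gradient (φ s) y i)
        (fderiv ℝ (fun z : ℝ × EuclideanSpace ℝ (Fin d) => fderiv ℝ (fun p : ℝ × EuclideanSpace ℝ (Fin d) => φ p.1 p.2) z ((0 : ℝ), EuclideanSpace.single i 1)) (t, y) ((1:ℝ), (0 : EuclideanSpace ℝ (Fin d)))) t := by
    intro y i
    have heq : (fun s => gradient (φ s) y i)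
        = (fun s => (fun z : ℝ × EuclideanSpace ℝ (Fin d) => fderiv ℝ (fun p : ℝ × EuclideanSpace ℝ (Fin d) => φ p.1 p.2) z ((0 : ℝ), EuclideanSpace.single i 1)) (s, y)) := by
      funext s; exact hgc s y i
    rw [heq]
    exact hasDerivAt_sliceT (((pd_contDiff hφ _).differentiable (by simp)) (t, y))
  -- energy time derivative
  have henergy : (fun s => ε ^ 2 / 2 * ‖gradient (φ s) x‖ ^ 2
          + (φ s x - 1) * Real.exp (φ s x)
          + (1 / 2) * ρ s x * ‖u s x‖ ^ 2) = (fun s => ε ^ 2 / 2 * (∑ i, gradient (φ s) x i ^ 2) + (φ s x - 1) * Real.exp (φ s x) + 1 / 2 * ρ s x * (∑ i, u s x i ^ 2)) := by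
    funext s
    rw [norm_sq_eq_sum, norm_sq_eq_sum]
  have hd1 : HasDerivAt (fun s => ∑ i, gradient (φ s) x i ^ 2)
      (2 * ∑ i, gradient (φ t) x i * (fderiv ℝ (fun z : ℝ × EuclideanSpace ℝ (Fin d) => fderiv ℝ (fun p : ℝ × EuclideanSpace ℝ (Fin d) => φ p.1 p.2) z ((0 : ℝ), EuclideanSpace.single i 1)) (t, x) ((1:ℝ), (0 : EuclideanSpace ℝ (Fin d))))) t := by
    have h := HasDerivAt.fun_sum (u := Finset.univ) (fun i _ => HasDerivAt.fun_pow (hdg x i) 2)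
    refine h.congr_deriv (Eq.symm ?_)
    rw [Finset.mul_sum]
    refine Finset.sum_congr rfl fun i _ => ?_
    push_cast
    ring
  have hd2 : HasDerivAt (fun s => ∑ i, u s x i ^ 2)
      (2 * ∑ i, u t x i * (fderiv ℝ (fun p : ℝ × EuclideanSpace ℝ (Fin d) => u p.1 p.2 i) (t, x) ((1:ℝ), (0 : EuclideanSpace ℝ (Fin d))))) t := by
    have h := HasDerivAt.fun_sum (u := Finset.univ) (fun i _ => HasDerivAt.fun_pow (hdu i) 2)
    refine h.congr_deriv (Eq.symm ?_)
    rw [Finset.mul_sum]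
    refine Finset.sum_congr rfl fun i _ => ?_
    push_cast
    ring
  have hE : HasDerivAt (fun s => ε ^ 2 / 2 * (∑ i, gradient (φ s) x i ^ 2) + (φ s x - 1) * Real.exp (φ s x) + 1 / 2 * ρ s x * (∑ i, u s x i ^ 2))
      (ε ^ 2 * (∑ i, gradient (φ t) x i * (fderiv ℝ (fun z : ℝ × EuclideanSpace ℝ (Fin d) => fderiv ℝ (fun p : ℝ × EuclideanSpace ℝ (Fin d) => φ p.1 p.2) z ((0 : ℝ), EuclideanSpace.single i 1)) (t, x) ((1:ℝ), (0 : EuclideanSpace ℝ (Fin d))))) + φ t x * Real.exp (φ t x) * (fderiv ℝ (fun p : ℝ × EuclideanSpace ℝ (Fin d) => φ p.1 p.2) (t, x) ((1:ℝ), (0 : EuclideanSpace ℝ (Fin d))))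
        + (1 / 2 * (fderiv ℝ (fun p : ℝ × EuclideanSpace ℝ (Fin d) => ρ p.1 p.2) (t, x) ((1:ℝ), (0 : EuclideanSpace ℝ (Fin d)))) * (∑ i, u t x i * u t x i)
            + ρ t x * (∑ i, u t x i * (fderiv ℝ (fun p : ℝ × EuclideanSpace ℝ (Fin d) => u p.1 p.2 i) (t, x) ((1:ℝ), (0 : EuclideanSpace ℝ (Fin d))))))) t := by
    have h := (((hasDerivAt_const t (ε ^ 2 / 2)).fun_mul hd1).add
        ((hdφ.sub_const 1).fun_mul hdφ.exp)).add
        (((hasDerivAt_const t ((1:ℝ) / 2)).fun_mul hdρ).fun_mul hd2)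
    refine h.congr_deriv (Eq.symm ?_)
    have hsq : ∀ i : Fin d, u t x i ^ 2 = u t x i * u t x i := fun i => sq (u t x i) ▸ rfl
    have h2 : (∑ i, u t x i ^ 2) = ∑ i, u t x i * u t x i :=
      Finset.sum_congr rfl fun i _ => by ring
    rw [h2]
    ring
  -- gradient of the time-derivative slice
  have hWc : ∀ (y : EuclideanSpace ℝ (Fin d)) (i : Fin d),
      gradient (fun y' => fderiv ℝ (fun p : ℝ × EuclideanSpace ℝ (Fin d) => φ p.1 p.2) (t, y') ((1:ℝ), (0 : EuclideanSpace ℝ (Fin d)))) y i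
        = fderiv ℝ (fun z : ℝ × EuclideanSpace ℝ (Fin d) => fderiv ℝ (fun p : ℝ × EuclideanSpace ℝ (Fin d) => φ p.1 p.2) z ((0 : ℝ), EuclideanSpace.single i 1)) (t, y) ((1:ℝ), (0 : EuclideanSpace ℝ (Fin d))) := by
    intro y i
    have e1 : gradient (fun y' => fderiv ℝ (fun p : ℝ × EuclideanSpace ℝ (Fin d) => φ p.1 p.2) (t, y') ((1:ℝ), (0 : EuclideanSpace ℝ (Fin d)))) y i = fderiv ℝ (fun y' => fderiv ℝ (fun p : ℝ × EuclideanSpace ℝ (Fin d) => φ p.1 p.2) (t, y') ((1:ℝ), (0 : EuclideanSpace ℝ (Fin d)))) y (EuclideanSpace.single i 1) :=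
      gradient_apply' _ _ _
    have e2 : fderiv ℝ (fun y' => fderiv ℝ (fun p : ℝ × EuclideanSpace ℝ (Fin d) => φ p.1 p.2) (t, y') ((1:ℝ), (0 : EuclideanSpace ℝ (Fin d)))) y (EuclideanSpace.single i 1)
        = fderiv ℝ (fun z : ℝ × EuclideanSpace ℝ (Fin d) => fderiv ℝ (fun p : ℝ × EuclideanSpace ℝ (Fin d) => φ p.1 p.2) z ((1:ℝ), (0 : EuclideanSpace ℝ (Fin d)))) (t, y) ((0 : ℝ), EuclideanSpace.single i 1) :=
      fderiv_sliceX (((pd_contDiff hφ ((1:ℝ), (0 : EuclideanSpace ℝ (Fin d)))).differentiable (by simp)) (t, y)) _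
    have e3 : fderiv ℝ (fun z : ℝ × EuclideanSpace ℝ (Fin d) => fderiv ℝ (fun p : ℝ × EuclideanSpace ℝ (Fin d) => φ p.1 p.2) z ((1:ℝ), (0 : EuclideanSpace ℝ (Fin d)))) (t, y) ((0 : ℝ), EuclideanSpace.single i 1)
        = fderiv ℝ (fun z : ℝ × EuclideanSpace ℝ (Fin d) => fderiv ℝ (fun p : ℝ × EuclideanSpace ℝ (Fin d) => φ p.1 p.2) z ((0 : ℝ), EuclideanSpace.single i 1)) (t, y) ((1:ℝ), (0 : EuclideanSpace ℝ (Fin d))) :=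
      pd_swap hφ (t, y) ((1:ℝ), (0 : EuclideanSpace ℝ (Fin d))) ((0 : ℝ), EuclideanSpace.single i 1)
    exact e1.trans (e2.trans e3)
  have hW : ∀ y : EuclideanSpace ℝ (Fin d),
      deriv (fun s => gradient (φ s) y) t = gradient (fun y' => fderiv ℝ (fun p : ℝ × EuclideanSpace ℝ (Fin d) => φ p.1 p.2) (t, y') ((1:ℝ), (0 : EuclideanSpace ℝ (Fin d)))) y := by
    intro y
    refine HasDerivAt.deriv (hasDerivAt_euclidean fun i => ?_)
    rw [hWc y i]
    exact hdg y i
  have hsc : ∀ y : EuclideanSpace ℝ (Fin d),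
      φ t y + ‖u t y‖ ^ 2 / 2 = φ t y + 1 / 2 * ∑ i, u t y i * u t y i := by
    intro y
    rw [norm_sq_eq_sum]
    have h2 : (∑ i, u t y i ^ 2) = ∑ i, u t y i * u t y i :=
      Finset.sum_congr rfl fun i _ => by ring
    rw [h2]
    ring
  have hfluxeq : (fun y =>
        (φ t y + ‖u t y‖ ^ 2 / 2) • (ρ t y • u t y - q t y)
          - (ε ^ 2 * φ t y) • deriv (fun s => gradient (φ s) y) t
          - Λ t y • u t y)
      = (fun y => (φ t y + 1 / 2 * ∑ i, u t y i * u t y i) • (ρ t y • u t y - q t y)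
          - (ε ^ 2 * φ t y) • gradient (fun y' => fderiv ℝ (fun p : ℝ × EuclideanSpace ℝ (Fin d) => φ p.1 p.2) (t, y') ((1:ℝ), (0 : EuclideanSpace ℝ (Fin d)))) y - Λ t y • u t y) := by
    funext y
    rw [hW y, hsc y]
  -- differentiability for flux pieces
  have hh0 : ContDiff ℝ (⊤ : ℕ∞) (fun y' => fderiv ℝ (fun p : ℝ × EuclideanSpace ℝ (Fin d) => φ p.1 p.2) (t, y') ((1:ℝ), (0 : EuclideanSpace ℝ (Fin d)))) := sliceX_contDiff (pd_contDiff hφ ((1:ℝ), (0 : EuclideanSpace ℝ (Fin d)))) t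
  have dW : DifferentiableAt ℝ (fun y => gradient (fun y' => fderiv ℝ (fun p : ℝ × EuclideanSpace ℝ (Fin d) => φ p.1 p.2) (t, y') ((1:ℝ), (0 : EuclideanSpace ℝ (Fin d)))) y) x := (gradient_differentiable hh0) x
  have dS : DifferentiableAt ℝ (fun y => ∑ i, u t y i * u t y i) x :=
    DifferentiableAt.fun_sum fun i _ => (duti i).fun_mul (duti i)
  have df1 : DifferentiableAt ℝ (fun y => φ t y + 1 / 2 * ∑ i, u t y i * u t y i) x := dφt.add (dS.const_mul (1 / 2))
  have hs1 : vdiv (fun y => (φ t y + 1 / 2 * ∑ i, u t y i * u t y i) • (ρ t y • u t y - q t y)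
          - (ε ^ 2 * φ t y) • gradient (fun y' => fderiv ℝ (fun p : ℝ × EuclideanSpace ℝ (Fin d) => φ p.1 p.2) (t, y') ((1:ℝ), (0 : EuclideanSpace ℝ (Fin d)))) y - Λ t y • u t y) x
      = vdiv (fun y => (φ t y + 1 / 2 * ∑ i, u t y i * u t y i) • (ρ t y • u t y - q t y)
          - (ε ^ 2 * φ t y) • gradient (fun y' => fderiv ℝ (fun p : ℝ × EuclideanSpace ℝ (Fin d) => φ p.1 p.2) (t, y') ((1:ℝ), (0 : EuclideanSpace ℝ (Fin d)))) y) x - vdiv (fun y => Λ t y • u t y) x :=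
    vdiv_sub ((df1.smul dm).sub ((dφt.const_mul (ε ^ 2)).smul dW)) (dΛt.smul dut)
  have hs2 : vdiv (fun y => (φ t y + 1 / 2 * ∑ i, u t y i * u t y i) • (ρ t y • u t y - q t y)
          - (ε ^ 2 * φ t y) • gradient (fun y' => fderiv ℝ (fun p : ℝ × EuclideanSpace ℝ (Fin d) => φ p.1 p.2) (t, y') ((1:ℝ), (0 : EuclideanSpace ℝ (Fin d)))) y) x
      = vdiv (fun y => (φ t y + 1 / 2 * ∑ i, u t y i * u t y i) • (ρ t y • u t y - q t y)) x
          - vdiv (fun y => (ε ^ 2 * φ t y) • gradient (fun y' => fderiv ℝ (fun p : ℝ × EuclideanSpace ℝ (Fin d) => φ p.1 p.2) (t, y') ((1:ℝ), (0 : EuclideanSpace ℝ (Fin d)))) y) x :=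
    vdiv_sub (df1.smul dm) ((dφt.const_mul (ε ^ 2)).smul dW)
  have hs3 : vdiv (fun y => (φ t y + 1 / 2 * ∑ i, u t y i * u t y i) • (ρ t y • u t y - q t y)) x
      = fderiv ℝ (fun y => φ t y + 1 / 2 * ∑ i, u t y i * u t y i) x (ρ t x • u t x - q t x) + (φ t x + 1 / 2 * ∑ i, u t x i * u t x i) * vdiv (fun y => ρ t y • u t y - q t y) x := vdiv_smul df1 dm
  have hs4 : vdiv (fun y => (ε ^ 2 * φ t y) • gradient (fun y' => fderiv ℝ (fun p : ℝ × EuclideanSpace ℝ (Fin d) => φ p.1 p.2) (t, y') ((1:ℝ), (0 : EuclideanSpace ℝ (Fin d)))) y) x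
      = fderiv ℝ (fun y => ε ^ 2 * φ t y) x (gradient (fun y' => fderiv ℝ (fun p : ℝ × EuclideanSpace ℝ (Fin d) => φ p.1 p.2) (t, y') ((1:ℝ), (0 : EuclideanSpace ℝ (Fin d)))) x)
          + ε ^ 2 * φ t x * vdiv (fun y => gradient (fun y' => fderiv ℝ (fun p : ℝ × EuclideanSpace ℝ (Fin d) => φ p.1 p.2) (t, y') ((1:ℝ), (0 : EuclideanSpace ℝ (Fin d)))) y) x := vdiv_smul (dφt.const_mul (ε ^ 2)) dW
  have hs5 : vdiv (fun y => Λ t y • u t y) x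
      = fderiv ℝ (Λ t) x (u t x) + Λ t x * vdiv (fun y => u t y) x := vdiv_smul dΛt dut
  -- mass equation
  have hmass' : (fderiv ℝ (fun p : ℝ × EuclideanSpace ℝ (Fin d) => ρ p.1 p.2) (t, x) ((1:ℝ), (0 : EuclideanSpace ℝ (Fin d)))) + vdiv (fun y => ρ t y • u t y - q t y) x = 0 := by
    have h := hmass t ht x hx
    rwa [hdρ.deriv] at h
  have hdm : vdiv (fun y => ρ t y • u t y - q t y) x = -(fderiv ℝ (fun p : ℝ × EuclideanSpace ℝ (Fin d) => ρ p.1 p.2) (t, x) ((1:ℝ), (0 : EuclideanSpace ℝ (Fin d)))) := by linarith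
  -- momentum equations
  have hmom' : ∀ i : Fin d, (fderiv ℝ (fun p : ℝ × EuclideanSpace ℝ (Fin d) => ρ p.1 p.2) (t, x) ((1:ℝ), (0 : EuclideanSpace ℝ (Fin d)))) * u t x i + ρ t x * (fderiv ℝ (fun p : ℝ × EuclideanSpace ℝ (Fin d) => u p.1 p.2 i) (t, x) ((1:ℝ), (0 : EuclideanSpace ℝ (Fin d))))
      + (fderiv ℝ (fun y => u t y i) x (ρ t x • u t x - q t x) + u t x i * vdiv (fun y => ρ t y • u t y - q t y) x)
      = -(ρ t x * gradient (φ t) x i) + fderiv ℝ (Λ t) x (EuclideanSpace.single i 1) := by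
    intro i
    have h := hmom t ht x hx i
    rw [(hdρ.fun_mul (hdu i)).deriv,
      show vdiv (fun y => u t y i • (ρ t y • u t y - q t y)) x
          = fderiv ℝ (fun y => u t y i) x (ρ t x • u t x - q t x) + u t x i * vdiv (fun y => ρ t y • u t y - q t y) x from vdiv_smul (duti i) dm,
      gradient_apply' (Λ t) x i] at h
    exact h
  -- Poisson equation, differentiated in time
  have hvd : ∀ s : ℝ, vdiv (fun y => gradient (φ s) y) x
      = ∑ i, fderiv ℝ (fun z' : ℝ × EuclideanSpace ℝ (Fin d) => fderiv ℝ (fun p : ℝ × EuclideanSpace ℝ (Fin d) => φ p.1 p.2) z' ((0 : ℝ), EuclideanSpace.single i 1)) (s, x) ((0 : ℝ), EuclideanSpace.single i 1) := by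
    intro s
    rw [vdiv_eq_sum ((gradient_differentiable (sliceX_contDiff hφ s)).differentiableAt)]
    refine Finset.sum_congr rfl fun i _ => ?_
    have e0 : (fun y => gradient (φ s) y i)
        = (fun y => (fun z : ℝ × EuclideanSpace ℝ (Fin d) => fderiv ℝ (fun p : ℝ × EuclideanSpace ℝ (Fin d) => φ p.1 p.2) z ((0 : ℝ), EuclideanSpace.single i 1)) (s, y)) :=
      funext fun y => hgc s y i
    rw [e0]
    exact fderiv_sliceX (((pd_contDiff hφ ((0 : ℝ), EuclideanSpace.single i 1)).differentiable (by simp)) (s, x)) _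
  have hdP : HasDerivAt (fun s => -ε ^ 2 * vdiv (fun y => gradient (φ s) y) x)
      (-ε ^ 2 * ∑ i, fderiv ℝ (fun z : ℝ × EuclideanSpace ℝ (Fin d) => fderiv ℝ (fun z' : ℝ × EuclideanSpace ℝ (Fin d) => fderiv ℝ (fun p : ℝ × EuclideanSpace ℝ (Fin d) => φ p.1 p.2) z' ((0 : ℝ), EuclideanSpace.single i 1)) z ((0 : ℝ), EuclideanSpace.single i 1)) (t, x) ((1:ℝ), (0 : EuclideanSpace ℝ (Fin d)))) t := by
    have heqf : (fun s : ℝ => -ε ^ 2 * vdiv (fun y => gradient (φ s) y) x)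
        = (fun s : ℝ => -ε ^ 2 * ∑ i, fderiv ℝ (fun z' : ℝ × EuclideanSpace ℝ (Fin d) => fderiv ℝ (fun p : ℝ × EuclideanSpace ℝ (Fin d) => φ p.1 p.2) z' ((0 : ℝ), EuclideanSpace.single i 1)) (s, x) ((0 : ℝ), EuclideanSpace.single i 1)) :=
      funext fun s => by rw [hvd s]
    rw [heqf]
    exact HasDerivAt.const_mul (-ε ^ 2) (HasDerivAt.fun_sum (u := Finset.univ)
      (fun i _ => hasDerivAt_sliceT
        (((pd_contDiff (pd_contDiff hφ ((0 : ℝ), EuclideanSpace.single i 1)) ((0 : ℝ), EuclideanSpace.single i 1)).differentiable (by simp)) (t, x))))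
  have hdQ : HasDerivAt (fun s => ρ s x - Real.exp (φ s x))
      ((fderiv ℝ (fun p : ℝ × EuclideanSpace ℝ (Fin d) => ρ p.1 p.2) (t, x) ((1:ℝ), (0 : EuclideanSpace ℝ (Fin d)))) - Real.exp (φ t x) * (fderiv ℝ (fun p : ℝ × EuclideanSpace ℝ (Fin d) => φ p.1 p.2) (t, x) ((1:ℝ), (0 : EuclideanSpace ℝ (Fin d))))) t := hdρ.sub hdφ.exp
  have hev : (fun s => -ε ^ 2 * vdiv (fun y => gradient (φ s) y) x)
      =ᶠ[nhds t] (fun s => ρ s x - Real.exp (φ s x)) := by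
    filter_upwards [isOpen_Ioo.eventually_mem ht] with s hs
    exact hpoisson s hs x hx
  have hpois' : -ε ^ 2 * ∑ i, fderiv ℝ (fun z : ℝ × EuclideanSpace ℝ (Fin d) => fderiv ℝ (fun z' : ℝ × EuclideanSpace ℝ (Fin d) => fderiv ℝ (fun p : ℝ × EuclideanSpace ℝ (Fin d) => φ p.1 p.2) z' ((0 : ℝ), EuclideanSpace.single i 1)) z ((0 : ℝ), EuclideanSpace.single i 1)) (t, x) ((1:ℝ), (0 : EuclideanSpace ℝ (Fin d)))
      = (fderiv ℝ (fun p : ℝ × EuclideanSpace ℝ (Fin d) => ρ p.1 p.2) (t, x) ((1:ℝ), (0 : EuclideanSpace ℝ (Fin d)))) - Real.exp (φ t x) * (fderiv ℝ (fun p : ℝ × EuclideanSpace ℝ (Fin d) => φ p.1 p.2) (t, x) ((1:ℝ), (0 : EuclideanSpace ℝ (Fin d)))) :=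
    (hdP.congr_of_eventuallyEq hev.symm).unique hdQ
  -- divergence of W
  have hWdiv : vdiv (fun y => gradient (fun y' => fderiv ℝ (fun p : ℝ × EuclideanSpace ℝ (Fin d) => φ p.1 p.2) (t, y') ((1:ℝ), (0 : EuclideanSpace ℝ (Fin d)))) y) x = ∑ i, fderiv ℝ (fun z : ℝ × EuclideanSpace ℝ (Fin d) => fderiv ℝ (fun z' : ℝ × EuclideanSpace ℝ (Fin d) => fderiv ℝ (fun p : ℝ × EuclideanSpace ℝ (Fin d) => φ p.1 p.2) z' ((0 : ℝ), EuclideanSpace.single i 1)) z ((0 : ℝ), EuclideanSpace.single i 1)) (t, x) ((1:ℝ), (0 : EuclideanSpace ℝ (Fin d))) := by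
    rw [vdiv_eq_sum ((gradient_differentiable hh0).differentiableAt)]
    refine Finset.sum_congr rfl fun i _ => ?_
    have e0 : (fun y => gradient (fun y' => fderiv ℝ (fun p : ℝ × EuclideanSpace ℝ (Fin d) => φ p.1 p.2) (t, y') ((1:ℝ), (0 : EuclideanSpace ℝ (Fin d)))) y i)
        = (fun y => (fun z : ℝ × EuclideanSpace ℝ (Fin d) => fderiv ℝ (fun z' : ℝ × EuclideanSpace ℝ (Fin d) => fderiv ℝ (fun p : ℝ × EuclideanSpace ℝ (Fin d) => φ p.1 p.2) z' ((0 : ℝ), EuclideanSpace.single i 1)) z ((1:ℝ), (0 : EuclideanSpace ℝ (Fin d)))) (t, y)) :=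
      funext fun y => hWc y i
    rw [e0]
    have e1 : fderiv ℝ (fun y => (fun z : ℝ × EuclideanSpace ℝ (Fin d) =>
          fderiv ℝ (fun z' : ℝ × EuclideanSpace ℝ (Fin d) => fderiv ℝ (fun p : ℝ × EuclideanSpace ℝ (Fin d) => φ p.1 p.2) z' ((0 : ℝ), EuclideanSpace.single i 1)) z ((1:ℝ), (0 : EuclideanSpace ℝ (Fin d)))) (t, y)) x (EuclideanSpace.single i 1)
        = fderiv ℝ (fun z : ℝ × EuclideanSpace ℝ (Fin d) => fderiv ℝ (fun z' : ℝ × EuclideanSpace ℝ (Fin d) => fderiv ℝ (fun p : ℝ × EuclideanSpace ℝ (Fin d) => φ p.1 p.2) z' ((0 : ℝ), EuclideanSpace.single i 1)) z ((1:ℝ), (0 : EuclideanSpace ℝ (Fin d)))) (t, x) ((0 : ℝ), EuclideanSpace.single i 1) :=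
      fderiv_sliceX (((pd_contDiff (pd_contDiff hφ ((0 : ℝ), EuclideanSpace.single i 1)) ((1:ℝ), (0 : EuclideanSpace ℝ (Fin d)))).differentiable (by simp)) (t, x)) _
    rw [e1]
    exact pd_swap (pd_contDiff hφ ((0 : ℝ), EuclideanSpace.single i 1)) (t, x) ((1:ℝ), (0 : EuclideanSpace ℝ (Fin d))) ((0 : ℝ), EuclideanSpace.single i 1)
  -- expansion of the directional derivatives
  have hfd1 : fderiv ℝ (fun y => φ t y + 1 / 2 * ∑ i, u t y i * u t y i) x (ρ t x • u t x - q t x)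
      = fderiv ℝ (φ t) x (ρ t x • u t x - q t x) + ∑ i, u t x i * (fderiv ℝ (fun y => u t y i) x (ρ t x • u t x - q t x)) := by
    rw [fderiv_fun_add dφt (dS.const_mul (1 / 2)), fderiv_const_mul dS ((1:ℝ) / 2),
      fderiv_fun_sum (fun i _ => (duti i).fun_mul (duti i)),
      Finset.sum_congr rfl (fun i _ => fderiv_fun_mul (duti i) (duti i))]
    simp only [ContinuousLinearMap.add_apply, ContinuousLinearMap.smul_apply,
      ContinuousLinearMap.sum_apply, smul_eq_mul]
    rw [Finset.mul_sum]
    congr 1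
    refine Finset.sum_congr rfl fun i _ => ?_
    ring
  have hmx : ∀ i : Fin d, ((ρ t x • u t x - q t x)) i = ρ t x * u t x i - η * gradient (φ t) x i := by
    intro i
    rw [hqdef t x]
    simp [smul_eq_mul]
  have hfdφm2 : fderiv ℝ (φ t) x (ρ t x • u t x - q t x)
      = ρ t x * (∑ i, u t x i * gradient (φ t) x i)
        - η * (∑ i, gradient (φ t) x i * gradient (φ t) x i) := by
    rw [clm_eval_eq_sum (fderiv ℝ (φ t) x) (ρ t x • u t x - q t x)]
    have h1 : ∀ i ∈ Finset.univ, ((ρ t x • u t x - q t x)) i * fderiv ℝ (φ t) x (EuclideanSpace.single i 1)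
        = ρ t x * (u t x i * gradient (φ t) x i) - η * (gradient (φ t) x i * gradient (φ t) x i) := by
      intro i _
      rw [hmx i, ← gradient_apply']
      ring
    rw [Finset.sum_congr rfl h1, Finset.sum_sub_distrib, ← Finset.mul_sum, ← Finset.mul_sum]
  have hfdφW : fderiv ℝ (fun y => ε ^ 2 * φ t y) x (gradient (fun y' => fderiv ℝ (fun p : ℝ × EuclideanSpace ℝ (Fin d) => φ p.1 p.2) (t, y') ((1:ℝ), (0 : EuclideanSpace ℝ (Fin d)))) x)
      = ε ^ 2 * ∑ i, gradient (φ t) x i * (fderiv ℝ (fun z : ℝ × EuclideanSpace ℝ (Fin d) => fderiv ℝ (fun p : ℝ × EuclideanSpace ℝ (Fin d) => φ p.1 p.2) z ((0 : ℝ), EuclideanSpace.single i 1)) (t, x) ((1:ℝ), (0 : EuclideanSpace ℝ (Fin d)))) := by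
    rw [fderiv_const_mul dφt (ε ^ 2), ContinuousLinearMap.smul_apply, smul_eq_mul]
    congr 1
    rw [clm_eval_eq_sum (fderiv ℝ (φ t) x) (gradient (fun y' => fderiv ℝ (fun p : ℝ × EuclideanSpace ℝ (Fin d) => φ p.1 p.2) (t, y') ((1:ℝ), (0 : EuclideanSpace ℝ (Fin d)))) x)]
    refine Finset.sum_congr rfl fun i _ => ?_
    rw [hWc x i, ← gradient_apply']
    ring
  have hfdΛ : fderiv ℝ (Λ t) x (u t x) = ∑ i, u t x i * (fderiv ℝ (Λ t) x (EuclideanSpace.single i 1)) :=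
    clm_eval_eq_sum (fderiv ℝ (Λ t) x) (u t x)
  have hsum : (∑ i, u t x i * (fderiv ℝ (fun y => u t y i) x (ρ t x • u t x - q t x)))
      = (∑ i, u t x i * (fderiv ℝ (Λ t) x (EuclideanSpace.single i 1))) - ρ t x * (∑ i, u t x i * gradient (φ t) x i)
        - (fderiv ℝ (fun p : ℝ × EuclideanSpace ℝ (Fin d) => ρ p.1 p.2) (t, x) ((1:ℝ), (0 : EuclideanSpace ℝ (Fin d)))) * (∑ i, u t x i * u t x i)
        - ρ t x * (∑ i, u t x i * (fderiv ℝ (fun p : ℝ × EuclideanSpace ℝ (Fin d) => u p.1 p.2 i) (t, x) ((1:ℝ), (0 : EuclideanSpace ℝ (Fin d)))))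
        - vdiv (fun y => ρ t y • u t y - q t y) x * (∑ i, u t x i * u t x i) := by
    have h1 : ∀ i ∈ Finset.univ, u t x i * (fderiv ℝ (fun y => u t y i) x (ρ t x • u t x - q t x))
        = u t x i * (fderiv ℝ (Λ t) x (EuclideanSpace.single i 1)) - ρ t x * (u t x i * gradient (φ t) x i)
          - (fderiv ℝ (fun p : ℝ × EuclideanSpace ℝ (Fin d) => ρ p.1 p.2) (t, x) ((1:ℝ), (0 : EuclideanSpace ℝ (Fin d)))) * (u t x i * u t x i)
          - ρ t x * (u t x i * (fderiv ℝ (fun p : ℝ × EuclideanSpace ℝ (Fin d) => u p.1 p.2 i) (t, x) ((1:ℝ), (0 : EuclideanSpace ℝ (Fin d)))))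
          - vdiv (fun y => ρ t y • u t y - q t y) x * (u t x i * u t x i) := by
      intro i _
      linear_combination u t x i * hmom' i
    rw [Finset.sum_congr rfl h1, Finset.sum_sub_distrib, Finset.sum_sub_distrib,
      Finset.sum_sub_distrib, Finset.sum_sub_distrib, ← Finset.mul_sum, ← Finset.mul_sum,
      ← Finset.mul_sum, ← Finset.mul_sum]
  have hT3 : ε ^ 2 * φ t x * (∑ i, fderiv ℝ (fun z : ℝ × EuclideanSpace ℝ (Fin d) => fderiv ℝ (fun z' : ℝ × EuclideanSpace ℝ (Fin d) => fderiv ℝ (fun p : ℝ × EuclideanSpace ℝ (Fin d) => φ p.1 p.2) z' ((0 : ℝ), EuclideanSpace.single i 1)) z ((0 : ℝ), EuclideanSpace.single i 1)) (t, x) ((1:ℝ), (0 : EuclideanSpace ℝ (Fin d))))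
      = φ t x * (Real.exp (φ t x) * (fderiv ℝ (fun p : ℝ × EuclideanSpace ℝ (Fin d) => φ p.1 p.2) (t, x) ((1:ℝ), (0 : EuclideanSpace ℝ (Fin d)))) - (fderiv ℝ (fun p : ℝ × EuclideanSpace ℝ (Fin d) => ρ p.1 p.2) (t, x) ((1:ℝ), (0 : EuclideanSpace ℝ (Fin d))))) := by
    linear_combination (-(φ t x)) * hpois'
  have hΛx : Λ t x = α * vdiv (fun y => u t y) x := hΛdef t x
  -- assemble
  rw [henergy, hE.deriv, hfluxeq, hs1, hs2, hs3, hs4, hs5, hfd1, hfdφm2, hfdφW, hfdΛ,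
    hWdiv, hT3, hΛx, hsum, hdm]
  have hSaa : (0:ℝ) ≤ ∑ i, gradient (φ t) x i * gradient (φ t) x i :=
    Finset.sum_nonneg fun i _ => mul_self_nonneg _
  nlinarith [mul_nonneg hη.le hSaa, mul_nonneg hα.le
    (mul_self_nonneg (vdiv (fun y => u t y) x))]
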